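/- Let X be a complete metric space equipped with a midpoint map m, assume (X,m) is Busemann non-positively curved and weakly uniformly convex, and let a group Γ act on X by isometries. Let C ⊆ X be a nonempty bounded closed convex Γ-invariant subset that is minimal among nonempty closed convex Γ-invariant subsets with respect to inclusion. Then C is a single point; in particular Γ has a global fixed point in X. -/

import Mathlib

/-- `m` is a midpoint map on the metric space `X`. -/
def IsMidpointMap {X : Type*} [MetricSpace X] (m : X → X → X) : Prop :=
  ∀ x y : X, dist x (m x y) = dist x y / 2 ∧ dist y (m x y) = dist x y / 2

/-- `(X, m)` is Busemann non-positively curved. -/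
def IsBNPC {X : Type*} [MetricSpace X] (m : X → X → X) : Prop :=
  ∀ x₁ y₁ x₂ y₂ : X, dist (m x₁ y₁) (m x₂ y₂) ≤ (dist x₁ x₂ + dist y₁ y₂) / 2

/-- `(X, m)` is weakly uniformly convex. -/
def IsWUC {X : Type*} [MetricSpace X] (m : X → X → X) : Prop :=
  ∀ (x : X) (ε r : ℝ), 0 < ε → 0 < r →
    ∃ δ > (0 : ℝ), ∀ y₁ y₂ : X, dist x y₁ ≤ r → dist x y₂ ≤ r → ε * r ≤ dist y₁ y₂ →
      δ ≤ r - dist x (m y₁ y₂)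

/-- A subset `C` is convex with respect to the midpoint map `m`. -/
def MConvex {X : Type*} [MetricSpace X] (m : X → X → X) (C : Set X) : Prop :=
  ∀ y₁ ∈ C, ∀ y₂ ∈ C, m y₁ y₂ ∈ C

/-!
Isometries commute with `m`, because midpoints are unique under BNPC and WUC. Hence for every
`Γ`-invariant set `P` of centres, the points of `C` lying within `r` of all of `P` form a closed,
convex, `Γ`-invariant subset of `C`; by minimality it is empty or all of `C`.

Suppose `D = diam C > 0`, and let `δ` be the WUC constant at some `a ∈ C` for `ε = 1/2`, `r = D`.
Then `a` lies within `D - δ` of every midpoint of two points of `C` at distance at least `D / 2`,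
so every point of `C` does. The midpoint `u` of such a pair is therefore a point of `C` with
`C ⊆ closedBall u (D - δ)`, and then every point of `C` has this property, so `diam C ≤ D - δ`.
-/

open Metric

theorem Metric.exists_dist_gt_of_lt_diam {X : Type*} [MetricSpace X] {s : Set X} {d : ℝ}
    (hd₀ : 0 ≤ d) (hd : d < diam s) : ∃ y ∈ s, ∃ z ∈ s, d < dist y z := by
  by_contra! h
  exact (diam_le_of_forall_dist_le hd₀ h).not_gt hd

section Midpoint

variable {X : Type*} [MetricSpace X] {m : X → X → X}

theorem IsMidpointMap.mid_self (hm : IsMidpointMap m) (x : X) : m x x = x := by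
  simpa [eq_comm] using (hm x x).1

theorem IsBNPC.dist_mid_le (hm : IsMidpointMap m) (hB : IsBNPC m) (p y z : X) :
    dist (m y z) p ≤ (dist y p + dist z p) / 2 := by
  simpa [hm.mid_self] using hB y z p p

theorem IsBNPC.mconvex_closedBall (hm : IsMidpointMap m) (hB : IsBNPC m) (p : X) (r : ℝ) :
    MConvex m (closedBall p r) := by
  intro y hy z hz
  rw [mem_closedBall] at hy hz ⊢
  linarith [hB.dist_mid_le hm p y z]

theorem MConvex.inter {s t : Set X} (hs : MConvex m s) (ht : MConvex m t) :
    MConvex m (s ∩ t) :=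
  fun y hy z hz => ⟨hs y hy.1 z hz.1, ht y hy.2 z hz.2⟩

theorem MConvex.biInter {ι : Type*} {I : Set ι} {s : ι → Set X}
    (hs : ∀ i ∈ I, MConvex m (s i)) : MConvex m (⋂ i ∈ I, s i) := by
  simp only [MConvex, Set.mem_iInter₂]
  exact fun y hy z hz i hi => hs i hi y (hy i hi) z (hz i hi)

theorem IsWUC.midpoint_unique (hm : IsMidpointMap m) (hB : IsBNPC m) (hW : IsWUC m)
    {u v p q : X} (hp : dist u p = dist u v / 2 ∧ dist v p = dist u v / 2)
    (hq : dist u q = dist u v / 2 ∧ dist v q = dist u v / 2) : p = q := by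
  by_contra hpq
  set r := dist u v / 2 with hr_def
  have hr : 0 < r := by
    by_contra! hr
    exact hpq ((dist_le_zero.1 (hp.1.trans_le hr)).symm.trans (dist_le_zero.1 (hq.1.trans_le hr)))
  obtain ⟨δ, hδ, hWu⟩ := hW u (dist p q / r) r (div_pos (dist_pos.2 hpq) hr) hr
  have hu := hWu p q hp.1.le hq.1.le (by rw [div_mul_cancel₀ _ hr.ne'])
  have hv : dist (m p q) v ≤ r := by
    linarith [hB.dist_mid_le hm v p q, dist_comm p v, dist_comm q v]
  linarith [dist_triangle u (m p q) v, hr_def]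

theorem Isometry.map_mid (hm : IsMidpointMap m) (hB : IsBNPC m) (hW : IsWUC m) {f : X → X}
    (hf : Isometry f) (x y : X) : f (m x y) = m (f x) (f y) :=
  hW.midpoint_unique hm hB (by simpa [hf.dist_eq] using hm x y) (hm _ _)

end Midpoint

section Action

variable {X : Type*} [MetricSpace X] {Γ : Type*} [Group Γ] [MulAction Γ X] [IsIsometricSMul Γ X]

theorem smul_mem_biInter_closedBall {P : Set X} (hP : ∀ γ : Γ, ∀ p ∈ P, γ • p ∈ P) {r : ℝ}
    (γ : Γ) {x : X} (hx : x ∈ ⋂ p ∈ P, closedBall p r) : γ • x ∈ ⋂ p ∈ P, closedBall p r := by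
  simp only [Set.mem_iInter₂, mem_closedBall] at hx ⊢
  intro p hp
  rw [← smul_inv_smul γ p, dist_smul]
  exact hx _ (hP γ⁻¹ p hp)

variable {m : X → X → X} {C : Set X}

theorem forall_dist_le_of_minimal (hm : IsMidpointMap m) (hB : IsBNPC m) (hCcl : IsClosed C)
    (hCconv : MConvex m C) (hCinv : ∀ γ : Γ, ∀ x ∈ C, γ • x ∈ C)
    (hCmin : ∀ C' : Set X,
      (C'.Nonempty ∧ IsClosed C' ∧ MConvex m C' ∧ ∀ γ : Γ, ∀ x ∈ C', γ • x ∈ C') →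
      C' ⊆ C → C' = C)
    {P : Set X} (hP : ∀ γ : Γ, ∀ p ∈ P, γ • p ∈ P) {r : ℝ} {x₀ : X} (hx₀C : x₀ ∈ C)
    (hx₀ : ∀ p ∈ P, dist x₀ p ≤ r) : ∀ x ∈ C, ∀ p ∈ P, dist x p ≤ r := by
  have hx₀' : x₀ ∈ ⋂ p ∈ P, closedBall p r := by simpa only [Set.mem_iInter₂, mem_closedBall]
  have hsub : C ⊆ ⋂ p ∈ P, closedBall p r := Set.inter_eq_left.1 <|
    hCmin _ ⟨⟨x₀, hx₀C, hx₀'⟩, hCcl.inter (isClosed_biInter fun p _ => isClosed_closedBall),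
      hCconv.inter (MConvex.biInter fun p _ => hB.mconvex_closedBall hm p r),
      fun γ x hx => ⟨hCinv γ x hx.1, smul_mem_biInter_closedBall hP γ hx.2⟩⟩
      Set.inter_subset_left
  intro x hx
  simpa only [Set.mem_iInter₂, mem_closedBall] using hsub hx

theorem diam_eq_zero_of_minimal (hm : IsMidpointMap m) (hB : IsBNPC m) (hW : IsWUC m)
    (hCne : C.Nonempty) (hCb : Bornology.IsBounded C) (hCcl : IsClosed C)
    (hCconv : MConvex m C) (hCinv : ∀ γ : Γ, ∀ x ∈ C, γ • x ∈ C)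
    (hCmin : ∀ C' : Set X,
      (C'.Nonempty ∧ IsClosed C' ∧ MConvex m C' ∧ ∀ γ : Γ, ∀ x ∈ C', γ • x ∈ C') →
      C' ⊆ C → C' = C) :
    diam C = 0 := by
  obtain ⟨a, ha⟩ := hCne
  by_contra hD
  set D := diam C
  have hDpos : 0 < D := diam_nonneg.lt_of_ne' hD
  obtain ⟨δ, hδ, hWa⟩ := hW a (1 / 2) D one_half_pos hDpos
  set P := {q | ∃ y ∈ C, ∃ z ∈ C, 1 / 2 * D ≤ dist y z ∧ m y z = q}
  have hP : ∀ γ : Γ, ∀ q ∈ P, γ • q ∈ P := by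
    rintro γ _ ⟨y, hy, z, hz, hyz, rfl⟩
    exact ⟨γ • y, hCinv γ y hy, γ • z, hCinv γ z hz, by rwa [dist_smul],
      ((isometry_smul X γ).map_mid hm hB hW y z).symm⟩
  have haP : ∀ q ∈ P, dist a q ≤ D - δ := by
    rintro _ ⟨y, hy, z, hz, hyz, rfl⟩
    linarith [hWa y z (dist_le_diam_of_mem hCb ha hy) (dist_le_diam_of_mem hCb ha hz) hyz]
  have hCP := forall_dist_le_of_minimal hm hB hCcl hCconv hCinv hCmin hP ha haP
  obtain ⟨y, hy, z, hz, hyz⟩ := exists_dist_gt_of_lt_diam (by positivity) (half_lt_self hDpos)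
  have hu : ∀ x ∈ C, dist (m y z) x ≤ D - δ := fun x hx => by
    rw [dist_comm]
    exact hCP x hx _ ⟨y, hy, z, hz, by linarith, rfl⟩
  have hCC := forall_dist_le_of_minimal hm hB hCcl hCconv hCinv hCmin hCinv
    (hCconv y hy z hz) hu
  have : D ≤ D - δ := diam_le_of_forall_dist_le (dist_nonneg.trans (hCC a ha a ha)) hCC
  linarith

end Action

theorem stmt_11_general {X : Type*} [MetricSpace X] (m : X → X → X)
    (hm : IsMidpointMap m) (hB : IsBNPC m) (hW : IsWUC m)
    (Γ : Type*) [Group Γ] [MulAction Γ X]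
    (hiso : ∀ γ : Γ, Isometry fun x : X => γ • x)
    (C : Set X) (hCne : C.Nonempty) (hCb : Bornology.IsBounded C) (hCcl : IsClosed C)
    (hCconv : MConvex m C) (hCinv : ∀ γ : Γ, ∀ x ∈ C, γ • x ∈ C)
    (hCmin : ∀ C' : Set X,
      (C'.Nonempty ∧ IsClosed C' ∧ MConvex m C' ∧ ∀ γ : Γ, ∀ x ∈ C', γ • x ∈ C') →
      C' ⊆ C → C' = C) :
    ∃ x : X, C = {x} ∧ ∀ γ : Γ, γ • x = x := by
  have : IsIsometricSMul Γ X := ⟨hiso⟩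
  have hD := diam_eq_zero_of_minimal hm hB hW hCne hCb hCcl hCconv hCinv hCmin
  obtain ⟨a, ha⟩ := hCne
  have hCa : C = {a} := Set.eq_singleton_iff_unique_mem.2
    ⟨ha, fun x hx => dist_le_zero.1 (hD ▸ dist_le_diam_of_mem hCb hx ha)⟩
  exact ⟨a, hCa, fun γ => Set.mem_singleton_iff.1 (hCa ▸ hCinv γ a ha)⟩

theorem stmt_11 {X : Type*} [MetricSpace X] [CompleteSpace X] (m : X → X → X)
    (hm : IsMidpointMap m) (hB : IsBNPC m) (hW : IsWUC m)
    (Γ : Type*) [Group Γ] [MulAction Γ X]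
    (hiso : ∀ γ : Γ, Isometry fun x : X => γ • x)
    (C : Set X) (hCne : C.Nonempty) (hCb : Bornology.IsBounded C) (hCcl : IsClosed C)
    (hCconv : MConvex m C) (hCinv : ∀ γ : Γ, ∀ x ∈ C, γ • x ∈ C)
    (hCmin : ∀ C' : Set X,
      (C'.Nonempty ∧ IsClosed C' ∧ MConvex m C' ∧ ∀ γ : Γ, ∀ x ∈ C', γ • x ∈ C') →
      C' ⊆ C → C' = C) :
    ∃ x : X, C = {x} ∧ ∀ γ : Γ, γ • x = x :=
  stmt_11_general m hm hB hW Γ hiso C hCne hCb hCcl hCconv hCinv hCmin
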